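/- For every finite simplicial complex K there exists a full subcomplex L of K that is simplicially isomorphic to the square nerve N²(K) and such that K strong collapses to L. -/
import Mathlib


/- Theory of strong homotopy types of finite simplicial complexes
   (Barmak–Minian), basic definitions. -/

open Classical

namespace StrongHomotopy

/-- A finite abstract simplicial complex with vertices from the ambient type `V`:
a finite family of nonempty finite subsets of `V`, closed under nonempty subsets.
(All singletons of vertices actually used are faces, by downward closure.) -/
structure Cplx (V : Type) where
  faces : Finset (Finset V)
  nonempty_of_mem : ∀ ⦃σ : Finset V⦄, σ ∈ faces → σ.Nonempty
  down_closed : ∀ ⦃σ τ : Finset V⦄, σ ∈ faces → τ ⊆ σ → τ.Nonempty → τ ∈ faces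

variable {V W : Type}

/-- `v` is a vertex of `K`. -/
def IsVertex (K : Cplx V) (v : V) : Prop := {v} ∈ K.faces

noncomputable section

/-- The set of faces of the link of `v` in `K`. -/
def link (K : Cplx V) (v : V) : Finset (Finset V) :=
  K.faces.filter fun σ => v ∉ σ ∧ insert v σ ∈ K.faces

/-- A family of faces is a simplicial cone with apex `a`. -/
def IsConeWithApex (F : Finset (Finset V)) (a : V) : Prop :=
  {a} ∈ F ∧ ∀ σ ∈ F, insert a σ ∈ F

/-- A family of faces is a simplicial cone. -/
def IsCone (F : Finset (Finset V)) : Prop := ∃ a, IsConeWithApex F a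

/-- `v` is dominated by `v'` in `K`: the link of `v` is a cone with apex `v'`. -/
def DominatedBy (K : Cplx V) (v v' : V) : Prop := IsConeWithApex (link K v) v'

/-- `v` is a dominated vertex of `K`: its link is a simplicial cone. -/
def Dominated (K : Cplx V) (v : V) : Prop := IsCone (link K v)

/-- Deletion `K ∖ v`: the full subcomplex spanned by the vertices other than `v`. -/
def delete (K : Cplx V) (v : V) : Cplx V where
  faces := K.faces.filter fun σ => v ∉ σ
  nonempty_of_mem := fun σ h => K.nonempty_of_mem (Finset.mem_filter.mp h).1
  down_closed := by
    intro σ τ hσ hsub hne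
    rw [Finset.mem_filter] at hσ ⊢
    exact ⟨K.down_closed hσ.1 hsub hne, fun hv => hσ.2 (hsub hv)⟩

/-- The link of a vertex, as a simplicial complex. -/
def linkCplx (K : Cplx V) (v : V) : Cplx V where
  faces := link K v
  nonempty_of_mem := fun σ h => K.nonempty_of_mem (Finset.mem_filter.mp h).1
  down_closed := by
    intro σ τ hσ hsub hne
    simp only [link, Finset.mem_filter] at hσ ⊢
    refine ⟨K.down_closed hσ.1 hsub hne, fun hv => hσ.2.1 (hsub hv), ?_⟩
    exact K.down_closed hσ.2.2 (Finset.insert_subset_insert v hsub)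
      ⟨v, Finset.mem_insert_self v τ⟩

/-- Elementary strong collapse: deletion of a dominated vertex. -/
def ElemStrongCollapse (K L : Cplx V) : Prop := ∃ v, Dominated K v ∧ L = delete K v

/-- `K` strong collapses to `L` (a sequence of elementary strong collapses). -/
def StrongCollapses : Cplx V → Cplx V → Prop := Relation.ReflTransGen ElemStrongCollapse

/-- The complex with a single vertex `v`. -/
def pt (v : V) : Cplx V where
  faces := {{v}}
  nonempty_of_mem := by
    intro σ h
    rw [Finset.mem_singleton] at h
    subst h
    exact ⟨v, Finset.mem_singleton_self v⟩
  down_closed := by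
    intro σ τ hσ hsub hne
    rw [Finset.mem_singleton] at hσ ⊢
    subst hσ
    rcases Finset.subset_singleton_iff.mp hsub with h | h
    · exact absurd h (Finset.nonempty_iff_ne_empty.mp hne)
    · exact h

/-- `K` is strong collapsible: it strong collapses to a single vertex. -/
def StrongCollapsible (K : Cplx V) : Prop := ∃ v, StrongCollapses K (pt v)

/-- A minimal complex: no dominated vertices. -/
def MinimalCplx (K : Cplx V) : Prop := ∀ v, ¬ Dominated K v

/-- A vertex map is simplicial if it sends faces to faces. -/
def IsSimplicial (K : Cplx V) (L : Cplx W) (f : V → W) : Prop :=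
  ∀ σ ∈ K.faces, σ.image f ∈ L.faces

/-- Two vertex maps are contiguous. -/
def Contiguous (K : Cplx V) (L : Cplx W) (f g : V → W) : Prop :=
  ∀ σ ∈ K.faces, σ.image f ∪ σ.image g ∈ L.faces

/-- `f` and `g` lie in the same contiguity class: they are joined by
a finite chain of (pairwise contiguous) maps. -/
def ContigClass (K : Cplx V) (L : Cplx W) : (V → W) → (V → W) → Prop :=
  Relation.ReflTransGen (Contiguous K L)

/-- A strong equivalence of simplicial complexes. -/
def StrongEquiv (K : Cplx V) (L : Cplx W) (f : V → W) : Prop :=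
  IsSimplicial K L f ∧ ∃ g : W → V, IsSimplicial L K g ∧
    ContigClass K K (g ∘ f) id ∧ ContigClass L L (f ∘ g) id

/-- `f` is a simplicial isomorphism from `K` to `L`: a simplicial map,
injective on vertices, inducing a bijection on faces. -/
def IsIsoMap (K : Cplx V) (L : Cplx W) (f : V → W) : Prop :=
  IsSimplicial K L f ∧ Set.InjOn f {v | IsVertex K v} ∧
    K.faces.image (fun σ => σ.image f) = L.faces

/-- `K` and `L` are simplicially isomorphic. -/
def Isomorphic (K : Cplx V) (L : Cplx W) : Prop := ∃ f, IsIsoMap K L f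

/-- `L` is a subcomplex of `K`. -/
def Subcplx (L K : Cplx V) : Prop := L.faces ⊆ K.faces

/-- `L` is a full subcomplex of `K`. -/
def IsFullSub (L K : Cplx V) : Prop :=
  L.faces ⊆ K.faces ∧ ∀ σ ∈ K.faces, (∀ v ∈ σ, IsVertex L v) → σ ∈ L.faces

/-- `K₀` is a core of `K`: a minimal complex to which `K` strong collapses. -/
def IsCore (K K₀ : Cplx V) : Prop := MinimalCplx K₀ ∧ StrongCollapses K K₀

/-- Same strong homotopy type: joined by a finite sequence of strong collapses,
strong expansions and simplicial isomorphisms. (In the abstract setting, where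
new vertices may be created freely, isomorphisms are generated by collapses and
expansions; over a fixed ambient vertex type they must be added as moves.) -/
def SameSHT (K L : Cplx V) : Prop :=
  Relation.ReflTransGen
    (fun A B => ElemStrongCollapse A B ∨ ElemStrongCollapse B A ∨ Isomorphic A B) K L

/-- `K` is vertex-homogeneous: its automorphism group acts transitively on vertices. -/
def VertexHomog (K : Cplx V) : Prop :=
  ∀ v w, IsVertex K v → IsVertex K w → ∃ φ : V → V, IsIsoMap K K φ ∧ φ v = w

/-! ### The nerve -/

/-- The maximal faces of `K`. -/
def maxFaces (K : Cplx V) : Finset (Finset V) :=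
  K.faces.filter fun σ => ∀ τ ∈ K.faces, σ ⊆ τ → σ = τ

/-- The nerve of `K`: vertices are the maximal simplices of `K`; a nonempty set
of maximal simplices is a face iff the simplices have a common vertex. -/
def nerve (K : Cplx V) : Cplx (Finset V) where
  faces := (maxFaces K).powerset.filter fun S => S.Nonempty ∧ ∃ v, ∀ σ ∈ S, v ∈ σ
  nonempty_of_mem := fun S h => (Finset.mem_filter.mp h).2.1
  down_closed := by
    intro S T hS hsub hne
    rw [Finset.mem_filter, Finset.mem_powerset] at hS ⊢
    obtain ⟨hpow, -, v, hv⟩ := hS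
    exact ⟨hsub.trans hpow, hne, v, fun σ hσ => hv σ (hsub hσ)⟩

/-- Iterated ambient vertex types for iterated nerves. -/
def iterV (V : Type) : ℕ → Type := fun n => Nat.rec V (fun _ T => Finset T) n

/-- The iterated nerve `Nⁿ(K)` (with `N⁰(K) = K`). -/
def iterNerve (K : Cplx V) : (n : ℕ) → Cplx (iterV V n)
  | 0 => K
  | n + 1 => nerve (iterNerve K n)

/-- A complex consists of a single vertex. -/
def IsPoint (K : Cplx V) : Prop := ∃ v, K.faces = {{v}}

/-! ### Joins -/

/-- The left part of a set of vertices of `V ⊕ W`. -/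
def lefts (ρ : Finset (V ⊕ W)) : Finset V :=
  ρ.preimage Sum.inl Sum.inl_injective.injOn

/-- The right part of a set of vertices of `V ⊕ W`. -/
def rights (ρ : Finset (V ⊕ W)) : Finset W :=
  ρ.preimage Sum.inr Sum.inr_injective.injOn

lemma lefts_union_rights (ρ : Finset (V ⊕ W)) :
    (lefts ρ).image Sum.inl ∪ (rights ρ).image Sum.inr = ρ := by
  ext x
  cases x with
  | inl v => simp [lefts, rights]
  | inr w => simp [lefts, rights]

lemma lefts_eq (σ : Finset V) (τ : Finset W) :
    lefts (σ.image Sum.inl ∪ τ.image Sum.inr) = σ := by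
  ext v; simp [lefts]

lemma rights_eq (σ : Finset V) (τ : Finset W) :
    rights (σ.image Sum.inl ∪ τ.image Sum.inr) = τ := by
  ext w; simp [rights]

/-- The faces of the join `K * L`. -/
def joinFaces (K : Cplx V) (L : Cplx W) : Finset (Finset (V ⊕ W)) :=
  (((insert ∅ K.faces) ×ˢ (insert ∅ L.faces)).image
    (fun p => p.1.image Sum.inl ∪ p.2.image Sum.inr)).erase ∅

lemma mem_joinFaces {K : Cplx V} {L : Cplx W} {ρ : Finset (V ⊕ W)} :
    ρ ∈ joinFaces K L ↔
      ρ.Nonempty ∧ lefts ρ ∈ insert ∅ K.faces ∧ rights ρ ∈ insert ∅ L.faces := by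
  unfold joinFaces
  constructor
  · intro h
    have hne : ρ ≠ ∅ := Finset.ne_of_mem_erase h
    have h' := Finset.mem_of_mem_erase h
    rw [Finset.mem_image] at h'
    obtain ⟨p, hp, hρ⟩ := h'
    rw [Finset.mem_product] at hp
    subst hρ
    rw [lefts_eq, rights_eq]
    exact ⟨Finset.nonempty_iff_ne_empty.mpr hne, hp.1, hp.2⟩
  · rintro ⟨hne, hl, hr⟩
    apply Finset.mem_erase.mpr
    refine ⟨Finset.nonempty_iff_ne_empty.mp hne, ?_⟩
    rw [Finset.mem_image]
    exact ⟨(lefts ρ, rights ρ), Finset.mem_product.mpr ⟨hl, hr⟩, lefts_union_rights ρ⟩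

/-- The simplicial join `K * L` of complexes with disjoint vertex sets
(realized on the disjoint sum of the ambient types). -/
def join (K : Cplx V) (L : Cplx W) : Cplx (V ⊕ W) where
  faces := joinFaces K L
  nonempty_of_mem := fun ρ h => (mem_joinFaces.mp h).1
  down_closed := by
    intro ρ ρ' hρ hsub hne
    obtain ⟨-, hl, hr⟩ := mem_joinFaces.mp hρ
    apply mem_joinFaces.mpr
    refine ⟨hne, ?_, ?_⟩
    · rcases Finset.eq_empty_or_nonempty (lefts ρ') with h0 | h1
      · rw [h0]; exact Finset.mem_insert_self _ _
      · have hsubl : lefts ρ' ⊆ lefts ρ := by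
          intro v hv
          simp only [lefts, Finset.mem_preimage] at hv ⊢
          exact hsub hv
        have hKf : lefts ρ ∈ K.faces := by
          rcases Finset.mem_insert.mp hl with h | h
          · obtain ⟨v, hv⟩ := h1
            exact absurd (hsubl hv) (by simp [h])
          · exact h
        exact Finset.mem_insert.mpr (Or.inr (K.down_closed hKf hsubl h1))
    · rcases Finset.eq_empty_or_nonempty (rights ρ') with h0 | h1
      · rw [h0]; exact Finset.mem_insert_self _ _
      · have hsubr : rights ρ' ⊆ rights ρ := by
          intro w hw
          simp only [rights, Finset.mem_preimage] at hw ⊢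
          exact hsub hw
        have hLf : rights ρ ∈ L.faces := by
          rcases Finset.mem_insert.mp hr with h | h
          · obtain ⟨w, hw⟩ := h1
            exact absurd (hsubr hw) (by simp [h])
          · exact h
        exact Finset.mem_insert.mpr (Or.inr (L.down_closed hLf hsubr h1))

/-! ### Finite posets (finite T₀-spaces) -/

variable {P : Type} [PartialOrder P]

/-- `x` is a beat point of the finite poset `X`: the points of `X` strictly below
`x` have a maximum, or the points of `X` strictly above `x` have a minimum. -/
def BeatPoint (X : Finset P) (x : P) : Prop :=
  x ∈ X ∧ ((∃ y ∈ X, y < x ∧ ∀ z ∈ X, z < x → z ≤ y) ∨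
    (∃ y ∈ X, x < y ∧ ∀ z ∈ X, x < z → y ≤ z))

/-- Elementary strong collapse of finite posets: removal of a beat point. -/
def ElemPosetStrongCollapse (X Y : Finset P) : Prop :=
  ∃ x, BeatPoint X x ∧ Y = X.erase x

/-- Strong collapse of finite posets: successive removal of beat points. -/
def PosetStrongCollapses : Finset P → Finset P → Prop :=
  Relation.ReflTransGen ElemPosetStrongCollapse

/-- A finite poset is contractible iff it strong collapses to a point (Stong). -/
def PosetContractible (X : Finset P) : Prop := ∃ x, PosetStrongCollapses X {x}

/-- The link `Ĉ_x` of `x` in `X`: the points of `X` comparable with `x` and distinct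
from it. -/
def posetLink (X : Finset P) (x : P) : Finset P :=
  X.filter fun y => y < x ∨ x < y

/-- `x` is a weak point of `X`: its link is contractible. -/
def WeakPoint (X : Finset P) (x : P) : Prop :=
  x ∈ X ∧ PosetContractible (posetLink X x)

/-- Collapse of finite posets: successive removal of weak points. -/
def PosetCollapses : Finset P → Finset P → Prop :=
  Relation.ReflTransGen (fun X Y => ∃ x, WeakPoint X x ∧ Y = X.erase x)

/-- A finite poset is collapsible if it collapses to a point. -/
def PosetCollapsible (X : Finset P) : Prop := ∃ x, PosetCollapses X {x}

/-- The order complex of a finite poset: faces are the nonempty chains. -/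
def orderCplx (X : Finset P) : Cplx P where
  faces := X.powerset.filter fun σ => σ.Nonempty ∧ IsChain (· ≤ ·) (σ : Set P)
  nonempty_of_mem := fun σ h => (Finset.mem_filter.mp h).2.1
  down_closed := by
    intro σ τ hσ hsub hne
    rw [Finset.mem_filter, Finset.mem_powerset] at hσ ⊢
    exact ⟨hsub.trans hσ.1, hne, hσ.2.2.mono (Finset.coe_subset.mpr hsub)⟩

/-- The barycentric subdivision of a complex: the order complex of its poset of
faces (the face poset, ordered by inclusion). -/
def sd (K : Cplx V) : Cplx (Finset V) := orderCplx K.faces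

/-- Homotopy of order-preserving maps between finite posets: being joined by a
fence in the pointwise order. -/
def PosetHomotopic {X Y : Type} [Preorder X] [Preorder Y] (f g : X →o Y) : Prop :=
  Relation.ReflTransGen (fun p q : X →o Y => p ≤ q ∨ q ≤ p) f g

/-- Homotopy equivalence of finite posets. -/
def PosetHomotopyEquiv (X Y : Type) [Preorder X] [Preorder Y] : Prop :=
  ∃ (f : X →o Y) (g : Y →o X),
    PosetHomotopic (g.comp f) OrderHom.id ∧ PosetHomotopic (f.comp g) OrderHom.id

/-! ### Classical collapses and n-collapses -/

/-- Elementary (classical) simplicial collapse: removal of a free face `σ`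
together with the unique face `τ` properly containing it. -/
def ElemCollapse (K L : Cplx V) : Prop :=
  ∃ σ τ : Finset V, σ ∈ K.faces ∧ τ ∈ K.faces ∧ σ ⊂ τ ∧
    (∀ ρ ∈ K.faces, σ ⊂ ρ → ρ = τ) ∧ L.faces = K.faces \ {σ, τ}

/-- Classical simplicial collapse. -/
def Collapses : Cplx V → Cplx V → Prop := Relation.ReflTransGen ElemCollapse

/-- A complex is collapsible if it collapses to a point. -/
def Collapsible (K : Cplx V) : Prop := ∃ v, Collapses K (pt v)

/-- `n`-collapses: a `0`-collapse is a strong collapse; an `(n+1)`-collapse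
successively deletes vertices whose links are `n`-collapsible. -/
def NCollapses : ℕ → Cplx V → Cplx V → Prop
  | 0 => StrongCollapses
  | n + 1 => Relation.ReflTransGen
      (fun K L => ∃ v, (∃ w, NCollapses n (linkCplx K v) (pt w)) ∧ L = delete K v)

/-- `K` is `n`-collapsible: it `n`-collapses to a single vertex. -/
def NCollapsible (n : ℕ) (K : Cplx V) : Prop := ∃ v, NCollapses n K (pt v)

/-- `K` is non-evasive: it is `n`-collapsible for some `n`. -/
def NonEvasive (K : Cplx V) : Prop := ∃ n, NCollapsible n K

end

/-! ### Auxiliary material for Statement 7 -/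

noncomputable section Aux7

lemma cplx_ext {K L : Cplx V} (h : K.faces = L.faces) : K = L := by
  cases K; cases L; cases h; rfl

lemma mem_maxFaces {K : Cplx V} {σ : Finset V} :
    σ ∈ maxFaces K ↔ σ ∈ K.faces ∧ ∀ τ ∈ K.faces, σ ⊆ τ → σ = τ := by
  simp [maxFaces]

lemma exists_maximal_face (K : Cplx V) {σ : Finset V} (hσ : σ ∈ K.faces) :
    ∃ τ ∈ maxFaces K, σ ⊆ τ := by
  obtain ⟨τ, hτ, hmax⟩ := (K.faces.filter (σ ⊆ ·)).exists_max_image Finset.card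
    ⟨σ, by simp [hσ]⟩
  rw [Finset.mem_filter] at hτ
  refine ⟨τ, mem_maxFaces.mpr ⟨hτ.1, fun ρ hρ hsub => ?_⟩, hτ.2⟩
  have hρ' : ρ ∈ K.faces.filter (σ ⊆ ·) := by
    rw [Finset.mem_filter]; exact ⟨hρ, hτ.2.trans hsub⟩
  exact Finset.eq_of_subset_of_card_le hsub (hmax ρ hρ')

/-- The set of maximal faces of `K` containing `v`. -/
def Mset (K : Cplx V) (v : V) : Finset (Finset V) := (maxFaces K).filter (v ∈ ·)

lemma mem_nerve_faces {K : Cplx V} {S : Finset (Finset V)} :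
    S ∈ (nerve K).faces ↔ S ⊆ maxFaces K ∧ S.Nonempty ∧ ∃ v, ∀ σ ∈ S, v ∈ σ := by
  simp [nerve, Finset.mem_filter, Finset.mem_powerset, and_assoc]

lemma Mset_mem_nerve (K : Cplx V) {v : V} (hv : {v} ∈ K.faces) :
    Mset K v ∈ (nerve K).faces := by
  obtain ⟨τ, hτ, hsub⟩ := exists_maximal_face K hv
  refine mem_nerve_faces.mpr ⟨Finset.filter_subset _ _, ⟨τ, ?_⟩, v, ?_⟩
  · rw [Mset, Finset.mem_filter]
    exact ⟨hτ, hsub (Finset.mem_singleton_self v)⟩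
  · intro σ hσ
    exact (Finset.mem_filter.mp hσ).2

lemma mem_link {K : Cplx V} {v : V} {σ : Finset V} :
    σ ∈ link K v ↔ σ ∈ K.faces ∧ v ∉ σ ∧ insert v σ ∈ K.faces := by
  simp [link, Finset.mem_filter, and_assoc]

lemma insert_mem_of_Mset_subset {K : Cplx V} {v w : V}
    (h : Mset K v ⊆ Mset K w) {σ : Finset V} (hσ : σ ∈ K.faces) (hv : v ∈ σ) :
    insert w σ ∈ K.faces := by
  obtain ⟨τ, hτ, hsub⟩ := exists_maximal_face K hσ
  have hτv : τ ∈ Mset K v := by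
    rw [Mset, Finset.mem_filter]; exact ⟨hτ, hsub hv⟩
  have hw : w ∈ τ := (Finset.mem_filter.mp (h hτv)).2
  exact K.down_closed (mem_maxFaces.mp hτ).1
    (Finset.insert_subset hw hsub) ⟨w, Finset.mem_insert_self w σ⟩

lemma dominatedBy_of_Mset_subset {K : Cplx V} {v w : V} (hv : {v} ∈ K.faces)
    (hne : w ≠ v) (h : Mset K v ⊆ Mset K w) : DominatedBy K v w := by
  constructor
  · -- {w} ∈ link K v
    have h1 : insert w {v} ∈ K.faces :=
      insert_mem_of_Mset_subset h hv (Finset.mem_singleton_self v)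
    refine mem_link.mpr ⟨K.down_closed h1
      (Finset.singleton_subset_iff.mpr (Finset.mem_insert_self w {v}))
      ⟨w, Finset.mem_singleton_self w⟩, ?_, ?_⟩
    · simp [Ne.symm hne]
    · have : insert v ({w} : Finset V) = insert w {v} := by
        ext x; simp [or_comm]
      rw [this]; exact h1
  · intro σ hσ
    obtain ⟨hσK, hvσ, hins⟩ := mem_link.mp hσ
    have h1 : insert w (insert v σ) ∈ K.faces :=
      insert_mem_of_Mset_subset h hins (Finset.mem_insert_self v σ)
    have h2 : insert w σ ∈ K.faces := by
      refine K.down_closed h1 ?_ ⟨w, Finset.mem_insert_self w σ⟩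
      intro x hx
      rcases Finset.mem_insert.mp hx with rfl | hx
      · exact Finset.mem_insert_self _ _
      · exact Finset.mem_insert_of_mem (Finset.mem_insert_of_mem hx)
    refine mem_link.mpr ⟨h2, ?_, ?_⟩
    · intro hmem
      rcases Finset.mem_insert.mp hmem with rfl | hmem
      · exact hne rfl
      · exact hvσ hmem
    · have : insert v (insert w σ) = insert w (insert v σ) := by
        ext x; simp; tauto
      rw [this]; exact h1

lemma mem_delete_faces {K : Cplx V} {u : V} {σ : Finset V} :
    σ ∈ (delete K u).faces ↔ σ ∈ K.faces ∧ u ∉ σ := by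
  simp [delete, Finset.mem_filter]

lemma dominatedBy_delete {K : Cplx V} {u v w : V} (h : DominatedBy K v w)
    (huv : u ≠ v) (huw : u ≠ w) : DominatedBy (delete K u) v w := by
  have hlink : ∀ σ : Finset V, σ ∈ link (delete K u) v ↔ σ ∈ link K v ∧ u ∉ σ := by
    intro σ
    constructor
    · intro hσ
      obtain ⟨hσK, hvσ, hins⟩ := mem_link.mp hσ
      obtain ⟨hσK', huσ⟩ := mem_delete_faces.mp hσK
      exact ⟨mem_link.mpr ⟨hσK', hvσ, (mem_delete_faces.mp hins).1⟩, huσ⟩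
    · rintro ⟨hσ, huσ⟩
      obtain ⟨hσK, hvσ, hins⟩ := mem_link.mp hσ
      refine mem_link.mpr ⟨mem_delete_faces.mpr ⟨hσK, huσ⟩, hvσ,
        mem_delete_faces.mpr ⟨hins, ?_⟩⟩
      intro hmem
      rcases Finset.mem_insert.mp hmem with rfl | hmem
      · exact huv rfl
      · exact huσ hmem
  obtain ⟨hw, hcone⟩ := h
  constructor
  · exact (hlink {w}).mpr ⟨hw, by simp [huw]⟩
  · intro σ hσ
    obtain ⟨hσ', huσ⟩ := (hlink σ).mp hσ
    refine (hlink (insert w σ)).mpr ⟨hcone σ hσ', ?_⟩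
    intro hmem
    rcases Finset.mem_insert.mp hmem with rfl | hmem
    · exact huw rfl
    · exact huσ hmem

/-- The full subcomplex of `K` spanned by the vertices in `A`. -/
def restrict (K : Cplx V) (A : Finset V) : Cplx V where
  faces := K.faces.filter (· ⊆ A)
  nonempty_of_mem := fun σ h => K.nonempty_of_mem (Finset.mem_filter.mp h).1
  down_closed := by
    intro σ τ hσ hsub hne
    rw [Finset.mem_filter] at hσ ⊢
    exact ⟨K.down_closed hσ.1 hsub hne, hsub.trans hσ.2⟩

lemma isFullSub_restrict (K : Cplx V) (A : Finset V) : IsFullSub (restrict K A) K := by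
  constructor
  · exact Finset.filter_subset _ _
  · intro σ hσ hv
    rw [restrict, Finset.mem_filter]
    refine ⟨hσ, fun x hx => ?_⟩
    have := hv x hx
    rw [IsVertex, restrict, Finset.mem_filter] at this
    exact this.2 (Finset.mem_singleton_self x)

lemma vertex_mem_of_mem_face {K : Cplx V} {σ : Finset V} (hσ : σ ∈ K.faces)
    {x : V} (hx : x ∈ σ) : {x} ∈ K.faces :=
  K.down_closed hσ (Finset.singleton_subset_iff.mpr hx) ⟨x, Finset.mem_singleton_self x⟩

lemma strongCollapses_restrict (A : Finset V) :
    ∀ (n : ℕ) (K : Cplx V), ((K.faces.biUnion id) \ A).card ≤ n →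
    (∀ v, {v} ∈ K.faces → v ∉ A → ∃ w ∈ A, DominatedBy K v w) →
    StrongCollapses K (restrict K A) := by
  intro n
  induction n with
  | zero =>
    intro K hcard hdom
    have hall : ∀ σ ∈ K.faces, σ ⊆ A := by
      intro σ hσ x hx
      by_contra hxA
      have hmem : x ∈ (K.faces.biUnion id) \ A := by
        rw [Finset.mem_sdiff]
        exact ⟨Finset.mem_biUnion.mpr ⟨σ, hσ, hx⟩, hxA⟩
      have := Finset.card_pos.mpr ⟨x, hmem⟩
      omega
    have : restrict K A = K := by
      apply cplx_ext
      exact Finset.filter_true_of_mem hall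
    rw [this]
    exact Relation.ReflTransGen.refl
  | succ n ih =>
    intro K hcard hdom
    by_cases hex : ∃ v, {v} ∈ K.faces ∧ v ∉ A
    · obtain ⟨v, hv, hvA⟩ := hex
      obtain ⟨w, hwA, hdomvw⟩ := hdom v hv hvA
      have hstep : ElemStrongCollapse K (delete K v) := ⟨v, ⟨w, hdomvw⟩, rfl⟩
      have hvne : v ≠ w := fun h => hvA (h ▸ hwA)
      -- measure decreases
      have hsub : (delete K v).faces.biUnion id ⊆ (K.faces.biUnion id).erase v := by
        intro x hx
        obtain ⟨σ, hσ, hxσ⟩ := Finset.mem_biUnion.mp hx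
        obtain ⟨hσK, hvσ⟩ := mem_delete_faces.mp hσ
        refine Finset.mem_erase.mpr ⟨fun h => hvσ (h ▸ hxσ), ?_⟩
        exact Finset.mem_biUnion.mpr ⟨σ, hσK, hxσ⟩
      have hvmem : v ∈ (K.faces.biUnion id) \ A := by
        rw [Finset.mem_sdiff]
        exact ⟨Finset.mem_biUnion.mpr ⟨{v}, hv, Finset.mem_singleton_self v⟩, hvA⟩
      have hcard' : (((delete K v).faces.biUnion id) \ A).card ≤ n := by
        have h1 : ((delete K v).faces.biUnion id) \ A ⊆
            ((K.faces.biUnion id) \ A).erase v := by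
          intro x hx
          rw [Finset.mem_sdiff] at hx
          have := Finset.mem_erase.mp (hsub hx.1)
          refine Finset.mem_erase.mpr ⟨this.1, Finset.mem_sdiff.mpr ⟨this.2, hx.2⟩⟩
        have h2 := Finset.card_le_card h1
        have h3 := Finset.card_erase_of_mem hvmem
        omega
      have hdom' : ∀ v', {v'} ∈ (delete K v).faces → v' ∉ A →
          ∃ w' ∈ A, DominatedBy (delete K v) v' w' := by
        intro v' hv' hv'A
        obtain ⟨hv'K, hvv'⟩ := mem_delete_faces.mp hv'
        have hne : v ≠ v' := fun h => hvv' (h ▸ Finset.mem_singleton_self v')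
        obtain ⟨w', hw'A, hd⟩ := hdom v' hv'K hv'A
        exact ⟨w', hw'A, dominatedBy_delete hd hne (fun h => hvA (h ▸ hw'A))⟩
      have hrec := ih (delete K v) hcard' hdom'
      have heq : restrict (delete K v) A = restrict K A := by
        apply cplx_ext
        ext σ
        simp only [restrict, delete, Finset.mem_filter]
        constructor
        · rintro ⟨⟨h1, h2⟩, h3⟩; exact ⟨h1, h3⟩
        · rintro ⟨h1, h3⟩
          exact ⟨⟨h1, fun hvσ => hvA (h3 hvσ)⟩, h3⟩
      rw [heq] at hrec
      exact Relation.ReflTransGen.head hstep hrec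
    · push_neg at hex
      have hall : ∀ σ ∈ K.faces, σ ⊆ A := by
        intro σ hσ x hx
        exact hex x (vertex_mem_of_mem_face hσ hx)
      have : restrict K A = K := cplx_ext (Finset.filter_true_of_mem hall)
      rw [this]
      exact Relation.ReflTransGen.refl

end Aux7

/-- there is a full subcomplex `L` of `K` isomorphic to `N²(K)` such
that `K` strong collapses to `L`. -/
theorem stmt7 {V : Type} (K : Cplx V) (hK : K.faces.Nonempty) :
    ∃ L : Cplx V, IsFullSub L K ∧ Isomorphic (nerve (nerve K)) L ∧
      StrongCollapses K L := by
  classical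
  -- a base vertex, to make choice total
  obtain ⟨σ0, hσ0⟩ := hK
  obtain ⟨v0, hv0⟩ := K.nonempty_of_mem hσ0
  -- every maximal face of the nerve is of the form `Mset K v`
  have hmaxN : ∀ Ξ ∈ maxFaces (nerve K), ∃ v, {v} ∈ K.faces ∧ Ξ = Mset K v := by
    intro Ξ hΞ
    obtain ⟨hΞN, hΞmax⟩ := mem_maxFaces.mp hΞ
    obtain ⟨hΞsub, ⟨σ, hσ⟩, v, hv⟩ := mem_nerve_faces.mp hΞN
    have hσK : σ ∈ K.faces := (mem_maxFaces.mp (hΞsub hσ)).1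
    have hvK : {v} ∈ K.faces := vertex_mem_of_mem_face hσK (hv σ hσ)
    refine ⟨v, hvK, hΞmax _ (Mset_mem_nerve K hvK) ?_⟩
    intro τ hτ
    rw [Mset, Finset.mem_filter]
    exact ⟨hΞsub hτ, hv τ hτ⟩
  -- the choice function
  set c : Finset (Finset V) → V := fun Ξ =>
    if h : ∃ v, {v} ∈ K.faces ∧ Ξ = Mset K v then h.choose else v0 with hc_def
  have hc : ∀ Ξ ∈ maxFaces (nerve K), {c Ξ} ∈ K.faces ∧ Ξ = Mset K (c Ξ) := by
    intro Ξ hΞ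
    have h := hmaxN Ξ hΞ
    simp only [hc_def, dif_pos h]
    exact h.choose_spec
  set A : Finset V := (maxFaces (nerve K)).image c with hA_def
  refine ⟨restrict K A, isFullSub_restrict K A, ⟨c, ?_, ?_, ?_⟩, ?_⟩
  · -- simplicial
    intro S hS
    obtain ⟨hSsub, hSne, σ, hσ⟩ := mem_nerve_faces.mp hS
    obtain ⟨Ξ0, hΞ0⟩ := hSne
    have hσK : σ ∈ maxFaces K := by
      have := (hc Ξ0 (hSsub hΞ0)).2
      have hσΞ := hσ Ξ0 hΞ0
      rw [this, Mset, Finset.mem_filter] at hσΞ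
      exact hσΞ.1
    have himg : S.image c ⊆ σ := by
      intro x hx
      obtain ⟨Ξ, hΞ, rfl⟩ := Finset.mem_image.mp hx
      have := (hc Ξ (hSsub hΞ)).2
      have hσΞ := hσ Ξ hΞ
      rw [this, Mset, Finset.mem_filter] at hσΞ
      exact hσΞ.2
    rw [restrict, Finset.mem_filter]
    constructor
    · exact K.down_closed (mem_maxFaces.mp hσK).1 himg
        ⟨c Ξ0, Finset.mem_image_of_mem c hΞ0⟩
    · intro x hx
      obtain ⟨Ξ, hΞ, rfl⟩ := Finset.mem_image.mp hx
      exact Finset.mem_image_of_mem c (hSsub hΞ)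
  · -- injective on vertices
    intro Ξ hΞ Ξ' hΞ' hcc
    simp only [Set.mem_setOf_eq, IsVertex] at hΞ hΞ'
    have h1 : Ξ ∈ maxFaces (nerve K) := by
      have := (mem_nerve_faces.mp hΞ).1
      exact this (Finset.mem_singleton_self Ξ)
    have h2 : Ξ' ∈ maxFaces (nerve K) := by
      have := (mem_nerve_faces.mp hΞ').1
      exact this (Finset.mem_singleton_self Ξ')
    rw [(hc Ξ h1).2, (hc Ξ' h2).2, hcc]
  · -- image of faces equals faces of restrict
    apply Finset.Subset.antisymm
    · intro τ hτ
      obtain ⟨S, hS, rfl⟩ := Finset.mem_image.mp hτ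
      -- same as simpliciality
      obtain ⟨hSsub, hSne, σ, hσ⟩ := mem_nerve_faces.mp hS
      obtain ⟨Ξ0, hΞ0⟩ := hSne
      have hσK : σ ∈ maxFaces K := by
        have := (hc Ξ0 (hSsub hΞ0)).2
        have hσΞ := hσ Ξ0 hΞ0
        rw [this, Mset, Finset.mem_filter] at hσΞ
        exact hσΞ.1
      have himg : S.image c ⊆ σ := by
        intro x hx
        obtain ⟨Ξ, hΞ, rfl⟩ := Finset.mem_image.mp hx
        have := (hc Ξ (hSsub hΞ)).2
        have hσΞ := hσ Ξ hΞ
        rw [this, Mset, Finset.mem_filter] at hσΞ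
        exact hσΞ.2
      rw [restrict, Finset.mem_filter]
      refine ⟨K.down_closed (mem_maxFaces.mp hσK).1 himg ⟨c Ξ0, Finset.mem_image_of_mem c hΞ0⟩, ?_⟩
      intro x hx
      obtain ⟨Ξ, hΞ, rfl⟩ := Finset.mem_image.mp hx
      exact Finset.mem_image_of_mem c (hSsub hΞ)
    · intro τ hτ
      rw [restrict, Finset.mem_filter] at hτ
      obtain ⟨hτK, hτA⟩ := hτ
      set S : Finset (Finset (Finset V)) :=
        (maxFaces (nerve K)).filter (fun Ξ => c Ξ ∈ τ) with hS_def
      have himg : S.image c = τ := by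
        apply Finset.Subset.antisymm
        · intro x hx
          obtain ⟨Ξ, hΞ, rfl⟩ := Finset.mem_image.mp hx
          exact (Finset.mem_filter.mp hΞ).2
        · intro u hu
          have huA := hτA hu
          obtain ⟨Ξ, hΞ, rfl⟩ := Finset.mem_image.mp huA
          exact Finset.mem_image_of_mem c (Finset.mem_filter.mpr ⟨hΞ, hu⟩)
      have hSface : S ∈ (nerve (nerve K)).faces := by
        refine mem_nerve_faces.mpr ⟨Finset.filter_subset _ _, ?_, ?_⟩
        · obtain ⟨u, hu⟩ := K.nonempty_of_mem hτK
          have huA := hτA hu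
          obtain ⟨Ξ, hΞ, hcΞ⟩ := Finset.mem_image.mp huA
          exact ⟨Ξ, Finset.mem_filter.mpr ⟨hΞ, hcΞ ▸ hu⟩⟩
        · obtain ⟨σ, hσmax, hτσ⟩ := exists_maximal_face K hτK
          refine ⟨σ, fun Ξ hΞ => ?_⟩
          obtain ⟨hΞmax, hcΞτ⟩ := Finset.mem_filter.mp hΞ
          rw [(hc Ξ hΞmax).2, Mset, Finset.mem_filter]
          exact ⟨hσmax, hτσ hcΞτ⟩
      rw [Finset.mem_image]
      exact ⟨S, hSface, himg⟩
  · -- strong collapse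
    apply strongCollapses_restrict A ((K.faces.biUnion id) \ A).card K le_rfl
    intro v hv hvA
    obtain ⟨Ξ, hΞmax, hsub⟩ := exists_maximal_face (nerve K) (Mset_mem_nerve K hv)
    set w := c Ξ with hw_def
    have hwA : w ∈ A := Finset.mem_image_of_mem c hΞmax
    have hwv : w ≠ v := fun h => hvA (h ▸ hwA)
    refine ⟨w, hwA, dominatedBy_of_Mset_subset hv hwv ?_⟩
    rw [← (hc Ξ hΞmax).2]
    exact hsub

end StrongHomotopy
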